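/- arXiv:1712.03233 — 3 statements merged into one kernel-verified Lean document; each statement's English description precedes it below -/
import Mathlib

section
/- The formal power series identity Σ_{k≥1} k x^k ∏_{j>k}(1-x^j) = Σ_{k≥1} x^k/(1-x^k) holds. -/
/-!
Write `(x; x)_n = ∏_{1 ≤ i ≤ n} (1 - x^i)` and `a_n = x^n / (x; x)_n`. Splitting off the first `k`
factors of `(x; x)_∞` gives `x^k ∏_{j > k} (1 - x^j) = (x; x)_∞ a_k`, so the left side is
`(x; x)_∞ Σ k a_k`. The `a_n` are the complete homogeneous symmetric functions of `x, x², x³, …`,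
whose power sums are `x^m / (1 - x^m)`; Newton's identity `k a_k = Σ_{m=1}^k x^m/(1 - x^m) a_{k-m}`
and a Cauchy product give `Σ k a_k = (Σ a_k) Σ x^m/(1 - x^m)`. Finally the partial sums of
`Σ a_k` are exactly `1 / (x; x)_n`, so `(x; x)_∞ Σ a_k = 1`.
-/

open Filter Finset Topology

namespace Lambert

section Algebra

variable {K : Type*} [Field K] {x : K}

def qPochhammer (x : K) (n : ℕ) : K := ∏ i ∈ range n, (1 - x ^ (i + 1))

def eulerTerm (x : K) (n : ℕ) : K := x ^ n / qPochhammer x n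

def lambertTerm (x : K) (m : ℕ) : K := x ^ (m + 1) / (1 - x ^ (m + 1))

lemma qPochhammer_succ (n : ℕ) :
    qPochhammer x (n + 1) = qPochhammer x n * (1 - x ^ (n + 1)) :=
  prod_range_succ _ _

@[simp] lemma eulerTerm_zero : eulerTerm x 0 = 1 := by simp [eulerTerm, qPochhammer]

variable (hx : ∀ n : ℕ, 1 - x ^ (n + 1) ≠ 0)
include hx

lemma qPochhammer_ne_zero (n : ℕ) : qPochhammer x n ≠ 0 :=
  prod_ne_zero_iff.mpr fun i _ => hx i

lemma eulerTerm_succ_mul (n : ℕ) :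
    eulerTerm x (n + 1) * (1 - x ^ (n + 1)) = x * eulerTerm x n := by
  have := qPochhammer_ne_zero hx n
  simp only [eulerTerm, qPochhammer_succ]
  field_simp [hx n]
  ring

lemma sum_range_eulerTerm (n : ℕ) :
    ∑ k ∈ range (n + 1), eulerTerm x k = (qPochhammer x n)⁻¹ := by
  induction n with
  | zero => simp [qPochhammer]
  | succ n ih =>
    have := qPochhammer_ne_zero hx n
    rw [sum_range_succ, ih, eulerTerm, qPochhammer_succ]
    field_simp [hx n]
    ring

lemma pow_mul_sum_range_eulerTerm (n : ℕ) :
    x ^ n * ∑ k ∈ range (n + 1), eulerTerm x k = eulerTerm x n := by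
  rw [sum_range_eulerTerm hx, eulerTerm, div_eq_mul_inv]

lemma lambertTerm_mul_one_sub (m : ℕ) : lambertTerm x m * (1 - x ^ (m + 1)) = x ^ (m + 1) :=
  div_mul_cancel₀ _ (hx m)

lemma lambertTerm_mul_eulerTerm_succ_mul (i j : ℕ) :
    lambertTerm x i * eulerTerm x (j + 1) * (1 - x ^ (i + j + 1 + 1)) =
      x * (lambertTerm x i * eulerTerm x j) + x ^ (i + j + 1 + 1) * eulerTerm x (j + 1) := by
  linear_combination lambertTerm x i * eulerTerm_succ_mul hx j +
    eulerTerm x (j + 1) * x ^ (j + 1) * lambertTerm_mul_one_sub hx i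

lemma succ_mul_eulerTerm_succ (n : ℕ) :
    (n + 1) * eulerTerm x (n + 1) =
      ∑ p ∈ antidiagonal n, lambertTerm x p.1 * eulerTerm x p.2 := by
  induction n with
  | zero => simp [eulerTerm, qPochhammer, lambertTerm]
  | succ n ih =>
    -- both sides `c n` satisfy `c (n + 1) * (1 - x ^ (n + 2)) = x * c n + x * eulerTerm x (n + 1)`
    have hterm : ∀ p ∈ antidiagonal n,
        lambertTerm x p.1 * eulerTerm x (p.2 + 1) * (1 - x ^ (n + 1 + 1)) =
          x * (lambertTerm x p.1 * eulerTerm x p.2) + x ^ (n + 1 + 1) * eulerTerm x (p.2 + 1) := by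
      rintro ⟨i, j⟩ hij
      obtain rfl : i + j = n := HasAntidiagonal.mem_antidiagonal.mp hij
      exact lambertTerm_mul_eulerTerm_succ_mul hx i j
    have htail : 1 + ∑ p ∈ antidiagonal n, eulerTerm x (p.2 + 1) =
        ∑ k ∈ range (n + 1 + 1), eulerTerm x k := by
      rw [← Nat.sum_antidiagonal_swap, Nat.sum_antidiagonal_eq_sum_range_succ_mk,
        sum_range_succ' _ (n + 1), eulerTerm_zero, add_comm]
      rfl
    have hrhs : (∑ p ∈ antidiagonal (n + 1), lambertTerm x p.1 * eulerTerm x p.2) *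
          (1 - x ^ (n + 1 + 1)) =
        x * ((n + 1) * eulerTerm x (n + 1)) + x * eulerTerm x (n + 1) := by
      rw [Nat.sum_antidiagonal_succ', add_mul, sum_mul, sum_congr rfl hterm, sum_add_distrib,
        ← mul_sum, ← mul_sum, ← ih, eulerTerm_zero, mul_one, lambertTerm_mul_one_sub hx (n + 1),
        ← pow_mul_sum_range_eulerTerm hx (n + 1), ← htail]
      ring
    have hlhs : ((n + 1 : ℕ) + 1) * eulerTerm x (n + 1 + 1) * (1 - x ^ (n + 1 + 1)) =
        x * ((n + 1) * eulerTerm x (n + 1)) + x * eulerTerm x (n + 1) := by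
      rw [mul_assoc, eulerTerm_succ_mul hx]
      push_cast
      ring
    exact mul_right_cancel₀ (hx (n + 1)) (hlhs.trans hrhs.symm)

end Algebra

@[to_additive]
lemma tprod_subtype_lt_eq_tprod_add {M : Type*} [CommMonoid M] [TopologicalSpace M] (f : ℕ → M)
    (k : ℕ) : ∏' j : {j : ℕ // k < j}, f j = ∏' i : ℕ, f (i + k + 1) :=
  let e : ℕ ≃ {j : ℕ // k < j} :=
    { toFun i := ⟨i + k + 1, by omega⟩
      invFun j := j.1 - (k + 1)
      left_inv i := by simp
      right_inv j := Subtype.ext (by simp; omega) }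
  (e.tprod_eq fun j => f j).symm

section Analysis

variable {𝕜 : Type*} [NormedField 𝕜] {x : 𝕜} (hx : ‖x‖ < 1)
include hx

lemma one_sub_pow_succ_ne_zero (n : ℕ) : 1 - x ^ (n + 1) ≠ 0 := by
  refine sub_ne_zero.mpr fun h => ?_
  have : ‖x‖ ^ (n + 1) < 1 := pow_lt_one₀ (norm_nonneg x) hx n.succ_ne_zero
  rw [← norm_pow, ← h, norm_one] at this
  exact this.false

lemma summable_norm_eulerTerm : Summable fun n => ‖eulerTerm x n‖ := by
  obtain ⟨r, hxr, hr1⟩ := exists_between hx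
  have hr : 0 < r := (norm_nonneg x).trans_lt hxr
  have hlim : Tendsto (fun n : ℕ => ‖1 - x ^ (n + 1)‖) atTop (𝓝 1) := by
    simpa using (((tendsto_pow_atTop_nhds_zero_of_norm_lt_one hx).comp
      (tendsto_add_atTop_nat 1)).const_sub 1).norm
  refine summable_of_ratio_norm_eventually_le hr1 ?_
  filter_upwards [hlim.eventually (lt_mem_nhds ((div_lt_one hr).mpr hxr))] with n hn
  have hq : 0 < ‖1 - x ^ (n + 1)‖ := (div_nonneg (norm_nonneg x) hr.le).trans_lt hn
  have hrec := congrArg norm (eulerTerm_succ_mul (one_sub_pow_succ_ne_zero hx) n)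
  rw [norm_mul, norm_mul] at hrec
  have hxq : ‖x‖ ≤ r * ‖1 - x ^ (n + 1)‖ := ((div_lt_iff₀' hr).mp hn).le
  rw [norm_norm, norm_norm]
  refine le_of_mul_le_mul_right ?_ hq
  calc ‖eulerTerm x (n + 1)‖ * ‖1 - x ^ (n + 1)‖ = ‖x‖ * ‖eulerTerm x n‖ := hrec
    _ ≤ r * ‖1 - x ^ (n + 1)‖ * ‖eulerTerm x n‖ := by gcongr
    _ = r * ‖eulerTerm x n‖ * ‖1 - x ^ (n + 1)‖ := by ring

lemma summable_norm_lambertTerm : Summable fun m => ‖lambertTerm x m‖ := by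
  refine Summable.of_nonneg_of_le (fun _ => norm_nonneg _) (fun m => ?_)
    ((summable_geometric_of_lt_one (norm_nonneg x) hx).div_const (1 - ‖x‖))
  have hden : 1 - ‖x‖ ≤ ‖1 - x ^ (m + 1)‖ :=
    calc 1 - ‖x‖ ≤ ‖(1 : 𝕜)‖ - ‖x ^ (m + 1)‖ := by
          rw [norm_one, norm_pow]
          gcongr
          exact pow_le_of_le_one (norm_nonneg x) hx.le m.succ_ne_zero
      _ ≤ ‖1 - x ^ (m + 1)‖ := norm_sub_norm_le _ _
  rw [lambertTerm, norm_div, norm_pow]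
  exact div_le_div₀ (by positivity) (pow_le_pow_of_le_one (norm_nonneg x) hx.le m.le_succ)
    (sub_pos.mpr hx) hden

variable [CompleteSpace 𝕜]

lemma multipliable_one_sub_pow_add (k : ℕ) : Multipliable fun i : ℕ => 1 - x ^ (i + k + 1) := by
  have hsum : Summable fun i : ℕ => ‖-x ^ (i + k + 1)‖ := by
    simpa [add_assoc] using
      (summable_nat_add_iff (k + 1)).mpr (summable_geometric_of_lt_one (norm_nonneg _) hx)
  simpa [sub_eq_add_neg] using multipliable_one_add_of_summable hsum

lemma pow_mul_tprod_one_sub_pow_add (k : ℕ) :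
    x ^ k * ∏' i : ℕ, (1 - x ^ (i + k + 1)) = (∏' i : ℕ, (1 - x ^ (i + 1))) * eulerTerm x k := by
  have hsplit := (multipliable_one_sub_pow_add hx k).prod_mul_tprod_nat_mul'
    (f := fun i : ℕ => 1 - x ^ (i + 1))
  rw [← hsplit, eulerTerm, ← qPochhammer]
  field_simp [qPochhammer_ne_zero (one_sub_pow_succ_ne_zero hx) k]

lemma tprod_mul_tsum_eulerTerm : (∏' i : ℕ, (1 - x ^ (i + 1))) * ∑' n, eulerTerm x n = 1 := by
  have hP := (multipliable_one_sub_pow_add hx 0).tendsto_prod_tprod_nat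
  have hS := ((summable_norm_eulerTerm hx).of_norm.tendsto_sum_tsum_nat).comp
    (tendsto_add_atTop_nat 1)
  refine tendsto_nhds_unique (hP.mul hS) (tendsto_const_nhds.congr fun n => ?_)
  simp only [Function.comp_apply, add_zero]
  rw [← qPochhammer, sum_range_eulerTerm (one_sub_pow_succ_ne_zero hx),
    mul_inv_cancel₀ (qPochhammer_ne_zero (one_sub_pow_succ_ne_zero hx) n)]

theorem tsum_succ_mul_pow_mul_tprod_one_sub_pow :
    ∑' n : ℕ, (n + 1) * x ^ (n + 1) * ∏' i : ℕ, (1 - x ^ (i + (n + 1) + 1)) =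
      ∑' m, lambertTerm x m := by
  calc _ = ∑' n : ℕ, (∏' i : ℕ, (1 - x ^ (i + 1))) * ∑ p ∈ antidiagonal n,
        lambertTerm x p.1 * eulerTerm x p.2 := tsum_congr fun n => by
        rw [mul_assoc, pow_mul_tprod_one_sub_pow_add hx, mul_left_comm,
          succ_mul_eulerTerm_succ (one_sub_pow_succ_ne_zero hx)]
    _ = (∏' i : ℕ, (1 - x ^ (i + 1))) * ((∑' m, lambertTerm x m) *
          ∑' n, eulerTerm x n) := by
      have := tsum_mul_tsum_eq_tsum_sum_antidiagonal_of_summable_norm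
        (f := lambertTerm x) (g := eulerTerm x)
        (summable_norm_lambertTerm hx) (summable_norm_eulerTerm hx)
      rw [tsum_mul_left, this]
    _ = _ := by
      linear_combination (∑' m, lambertTerm x m) * tprod_mul_tsum_eulerTerm hx

end Analysis

end Lambert

/-- The identity `Σ_{k≥1} k x^k ∏_{j>k}(1-x^j) = Σ_{k≥1} x^k/(1-x^k)` (for `|x|<1`). -/
theorem stmt_4 (x : ℝ) (hx : |x| < 1) :
    ∑' k : {k : ℕ // 1 ≤ k},
        ((k : ℕ) : ℝ) * x ^ (k : ℕ) * ∏' j : {j : ℕ // (k : ℕ) < j}, (1 - x ^ (j : ℕ)) =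
      ∑' k : {k : ℕ // 1 ≤ k}, x ^ (k : ℕ) / (1 - x ^ (k : ℕ)) := by
  calc _ = ∑' n : ℕ, (n + 1) * x ^ (n + 1) * ∏' i : ℕ, (1 - x ^ (i + (n + 1) + 1)) := by
        refine (Lambert.tsum_subtype_lt_eq_tsum_add
          (fun k => (k : ℝ) * x ^ k * ∏' j : {j : ℕ // k < j}, (1 - x ^ (j : ℕ))) 0).trans
          (tsum_congr fun n => ?_)
        rw [Lambert.tprod_subtype_lt_eq_tprod_add (fun j => 1 - x ^ j), Nat.cast_succ]
    _ = ∑' m, Lambert.lambertTerm x m :=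
        Lambert.tsum_succ_mul_pow_mul_tprod_one_sub_pow hx
    _ = _ := (Lambert.tsum_subtype_lt_eq_tsum_add (fun k => x ^ k / (1 - x ^ k)) 0).symm
end

section
/- The sum over all partitions λ of n of (largest part times its multiplicity) equals the coefficient of x^n in Σ_{k≥1} (k x^k/(1-x^k)) ∏_{j=1}^{k}(1-x^j)^{-1}. -/
/-!
A partition whose parts are at most `k + 1` is encoded by its multiplicity vector
`f : Fin (k + 1) → ℕ` (`f i` parts equal to `i + 1`, total size `weight f`). Its largest part is
`k + 1` exactly when `f (Fin.last k) ≠ 0`, so the left-hand side is the sum of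
`(k + 1) * f (Fin.last k) * x ^ weight f` over all pairs `(k, f)`; the pairs with
`f (Fin.last k) = 0` contribute nothing. For fixed `k`, splitting off the last coordinate factors
this sum as `(k + 1) * ∑ m, m * x ^ ((k + 1) * m)` times `∏ j ∈ Icc 1 k, (1 - x ^ j)⁻¹`, which is
the `k + 1`-st term on the right. Absolute convergence, needed to regroup, comes from the uniform bound
`∏ j ∈ Icc 1 k, (1 - a ^ j)⁻¹ ≤ exp ((1 - a)⁻¹ ^ 2)` for `0 ≤ a < 1`.
-/

open Finset

lemma HasSum.mul_of_summable_norm {R ι κ : Type*} [NormedRing R] [CompleteSpace R]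
    {f : ι → R} {g : κ → R} {a b : R} (hf : HasSum f a) (hg : HasSum g b)
    (hf' : Summable fun i => ‖f i‖) (hg' : Summable fun i => ‖g i‖) :
    HasSum (fun p : ι × κ => f p.1 * g p.2) (a * b) :=
  hf.mul hg (summable_mul_of_summable_norm hf' hg')

lemma abs_pow_lt_one {x : ℝ} (hx : |x| < 1) {k : ℕ} (hk : k ≠ 0) : |x ^ k| < 1 := by
  rw [abs_pow]
  exact pow_lt_one₀ (abs_nonneg x) hx hk

lemma inv_one_sub_le_exp {y : ℝ} (hy : y < 1) : (1 - y)⁻¹ ≤ Real.exp (y / (1 - y)) := by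
  have h : 1 - y ≠ 0 := by linarith
  calc (1 - y)⁻¹ = y / (1 - y) + 1 := by field_simp; ring
    _ ≤ _ := Real.add_one_le_exp _

lemma prod_inv_one_sub_pow_le {a : ℝ} (h0 : 0 ≤ a) (h1 : a < 1) (k : ℕ) :
    ∏ j ∈ Icc 1 k, (1 - a ^ j)⁻¹ ≤ Real.exp ((1 - a)⁻¹ ^ 2) := by
  have hpow {j : ℕ} (hj : j ∈ Icc 1 k) : a ^ j ≤ a :=
    pow_le_of_le_one h0 h1.le (by rw [mem_Icc] at hj; omega)
  calc ∏ j ∈ Icc 1 k, (1 - a ^ j)⁻¹ ≤ ∏ j ∈ Icc 1 k, Real.exp (a ^ j / (1 - a)) := by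
        refine prod_le_prod (fun j hj => ?_) fun j hj => ?_
        · exact inv_nonneg.2 (by linarith [hpow hj])
        · calc (1 - a ^ j)⁻¹ ≤ Real.exp (a ^ j / (1 - a ^ j)) :=
                inv_one_sub_le_exp (by linarith [hpow hj])
            _ ≤ Real.exp (a ^ j / (1 - a)) := by
                gcongr
                exact hpow hj
    _ = Real.exp ((∑ j ∈ Icc 1 k, a ^ j) / (1 - a)) := by rw [← Real.exp_sum, sum_div]
    _ ≤ Real.exp ((1 - a)⁻¹ ^ 2) := by
        rw [sq, ← div_eq_mul_inv]
        gcongr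
        rw [← tsum_geometric_of_lt_one h0 h1]
        exact Summable.sum_le_tsum _ (fun j _ => pow_nonneg h0 j)
          (summable_geometric_of_lt_one h0 h1)

lemma hasSum_subtype_one_le_iff {α : Type*} [AddCommMonoid α] [TopologicalSpace α] {f : ℕ → α}
    {a : α} : HasSum (fun k : {k : ℕ // 1 ≤ k} => f k) a ↔ HasSum (fun k => f (k + 1)) a := by
  refine (Function.Injective.hasSum_iff (g := fun k : ℕ => (⟨k + 1, by omega⟩ : {k : ℕ // 1 ≤ k}))
    (fun k l h => by simpa using h) fun k hk => ?_).symm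
  exact (hk ⟨k - 1, Subtype.ext (by simp; omega)⟩).elim

lemma Nat.Partition.sigma_ext {p q : Σ n, Nat.Partition n} (h : p.2.parts = q.2.parts) :
    p = q := by
  obtain ⟨n, p⟩ := p
  obtain ⟨m, q⟩ := q
  obtain rfl : n = m := by rw [← p.parts_sum, ← q.parts_sum, h]
  exact Sigma.ext rfl (heq_of_eq (Nat.Partition.ext h))

namespace LargestPart

def weight {N : ℕ} (f : Fin N → ℕ) : ℕ := ∑ i : Fin N, ((i : ℕ) + 1) * f i

lemma weight_snoc {N : ℕ} (t : Fin N → ℕ) (m : ℕ) :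
    weight (Fin.snoc t m : Fin (N + 1) → ℕ) = weight t + (N + 1) * m := by
  simp [weight, Fin.sum_univ_castSucc]

lemma hasSum_pow_weight (N : ℕ) {x : ℝ} (hx : |x| < 1) :
    HasSum (fun t : Fin N → ℕ => x ^ weight t) (∏ j ∈ Icc 1 N, (1 - x ^ j)⁻¹) := by
  induction N generalizing x with
  | zero => simp [weight]
  | succ N ih =>
    have hxN := abs_pow_lt_one hx (Nat.add_one_ne_zero N)
    have hsnoc : (fun t : Fin (N + 1) → ℕ => x ^ weight t) ∘ Fin.snocEquiv (fun _ => ℕ) =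
        fun p => (x ^ (N + 1)) ^ p.1 * x ^ weight p.2 := by
      funext ⟨m, t⟩
      change x ^ weight (Fin.snoc t m : Fin (N + 1) → ℕ) = _
      rw [weight_snoc, pow_add, pow_mul, mul_comm]
    rw [← (Fin.snocEquiv fun _ => ℕ).hasSum_iff, hsnoc, prod_Icc_succ_top (by omega), mul_comm]
    refine HasSum.mul_of_summable_norm (f := fun m : ℕ => (x ^ (N + 1)) ^ m)
      (g := fun t : Fin N → ℕ => x ^ weight t) (hasSum_geometric_of_abs_lt_one hxN) (ih hx) ?_ ?_
    · simpa using summable_geometric_of_lt_one (abs_nonneg _) hxN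
    · simpa using (ih (x := |x|) (by rwa [abs_abs])).summable

def ofCounts {N : ℕ} (f : Fin N → ℕ) : Multiset ℕ :=
  ∑ i : Fin N, Multiset.replicate (f i) ((i : ℕ) + 1)

section ofCounts

variable {N : ℕ}

lemma mem_ofCounts {f : Fin N → ℕ} {j : ℕ} (h : j ∈ ofCounts f) : 0 < j ∧ j ≤ N := by
  obtain ⟨i, -, hi⟩ := Multiset.mem_sum.1 h
  obtain ⟨-, rfl⟩ := Multiset.mem_replicate.1 hi
  omega

lemma sum_ofCounts (f : Fin N → ℕ) : (ofCounts f).sum = weight f := by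
  simp [ofCounts, weight, Multiset.sum_sum, mul_comm]

lemma count_ofCounts (f : Fin N → ℕ) (i : Fin N) : (ofCounts f).count ((i : ℕ) + 1) = f i := by
  simp [ofCounts, Multiset.count_sum', Multiset.count_replicate, Fin.val_eq_val]

lemma sup_ofCounts {k : ℕ} {f : Fin (k + 1) → ℕ} (h : f (Fin.last k) ≠ 0) :
    (ofCounts f).sup = k + 1 := by
  refine le_antisymm (Multiset.sup_le.2 fun j hj => (mem_ofCounts hj).2) (Multiset.le_sup ?_)
  have hcount := count_ofCounts f (Fin.last k)
  rw [Fin.val_last] at hcount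
  rw [← Multiset.count_ne_zero, hcount]
  exact h

lemma ofCounts_injective : Function.Injective (ofCounts (N := N)) := fun f g h =>
  funext fun i => by rw [← count_ofCounts f i, h, count_ofCounts]

lemma ofCounts_count {s : Multiset ℕ} (hpos : ∀ j ∈ s, 0 < j) (hle : ∀ j ∈ s, j ≤ N) :
    ofCounts (fun i : Fin N => s.count ((i : ℕ) + 1)) = s := by
  ext j
  by_cases hj : 0 < j ∧ j ≤ N
  · obtain ⟨i, rfl⟩ : ∃ i : Fin N, (i : ℕ) + 1 = j := ⟨⟨j - 1, by omega⟩, by simp; omega⟩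
    exact count_ofCounts _ i
  · rw [Multiset.count_eq_zero.2 fun h => hj (mem_ofCounts h),
      Multiset.count_eq_zero.2 fun h => hj ⟨hpos j h, hle j h⟩]

end ofCounts

def toPartition (j : Σ k : ℕ, Fin (k + 1) → ℕ) : Σ n, Nat.Partition n :=
  ⟨weight j.2, ⟨ofCounts j.2, fun h => (mem_ofCounts h).1, sum_ofCounts j.2⟩⟩

lemma toPartition_injOn : Set.InjOn toPartition {j | j.2 (Fin.last j.1) ≠ 0} := by
  rintro ⟨k, f⟩ hf ⟨k', f'⟩ hf' h
  change f (Fin.last k) ≠ 0 at hf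
  change f' (Fin.last k') ≠ 0 at hf'
  have hparts : ofCounts f = ofCounts f' := congrArg (fun p => p.2.parts) h
  obtain rfl : k = k' := by
    have := congrArg Multiset.sup hparts
    rw [sup_ofCounts hf, sup_ofCounts hf'] at this
    omega
  rw [ofCounts_injective hparts]

lemma exists_toPartition_eq (p : Σ n, Nat.Partition n) (hp : p.2.parts ≠ 0) :
    ∃ j : Σ k : ℕ, Fin (k + 1) → ℕ, j.2 (Fin.last j.1) ≠ 0 ∧ toPartition j = p := by
  obtain ⟨y, hy, hmax⟩ := Multiset.exists_max_image id hp
  obtain ⟨k, rfl⟩ : ∃ k, y = k + 1 := Nat.exists_eq_add_one.2 (p.2.parts_pos hy)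
  refine ⟨⟨k, fun i => p.2.parts.count ((i : ℕ) + 1)⟩, ?_, Nat.Partition.sigma_ext ?_⟩
  · simpa using hy
  · exact ofCounts_count (fun j => p.2.parts_pos) hmax

def partitionTerm (x : ℝ) (p : Σ n, Nat.Partition n) : ℝ :=
  ((p.2.parts.sup * p.2.parts.count p.2.parts.sup : ℕ) : ℝ) * x ^ p.1

def countsTerm (x : ℝ) (j : Σ k : ℕ, Fin (k + 1) → ℕ) : ℝ :=
  ((j.1 + 1 : ℕ) : ℝ) * j.2 (Fin.last j.1) * x ^ weight j.2

lemma partitionTerm_toPartition (x : ℝ) {j : Σ k : ℕ, Fin (k + 1) → ℕ}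
    (hj : j.2 (Fin.last j.1) ≠ 0) : partitionTerm x (toPartition j) = countsTerm x j := by
  have hcount := count_ofCounts j.2 (Fin.last j.1)
  rw [Fin.val_last] at hcount
  simp only [partitionTerm, countsTerm, toPartition, sup_ofCounts hj, hcount, Nat.cast_mul]

lemma hasSum_partitionTerm_iff {x s : ℝ} :
    HasSum (partitionTerm x) s ↔ HasSum (countsTerm x) s := by
  have last_ne_zero {j} (hj : countsTerm x j ≠ 0) : j.2 (Fin.last j.1) ≠ 0 := by
    contrapose! hj
    simp [countsTerm, hj]
  refine hasSum_iff_hasSum_of_ne_zero_bij (fun j => toPartition j.1)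
    (fun j j' h => Subtype.ext (toPartition_injOn (last_ne_zero j.2) (last_ne_zero j'.2) h))
    (fun p hp => ?_) (fun j => partitionTerm_toPartition x (last_ne_zero j.2))
  have hparts : p.2.parts ≠ 0 := by
    rintro h
    simp [partitionTerm, h] at hp
  obtain ⟨j, hj, rfl⟩ := exists_toPartition_eq p hparts
  refine ⟨⟨j, ?_⟩, rfl⟩
  rwa [Function.mem_support, ← partitionTerm_toPartition x hj]

noncomputable def largestPartGF (x : ℝ) (k : ℕ) : ℝ :=
  k * x ^ k / (1 - x ^ k) * ∏ j ∈ Icc 1 k, (1 - x ^ j)⁻¹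

lemma hasSum_countsTerm_fiber (k : ℕ) {x : ℝ} (hx : |x| < 1) :
    HasSum (fun f : Fin (k + 1) → ℕ => countsTerm x ⟨k, f⟩) (largestPartGF x (k + 1)) := by
  have hxk := abs_pow_lt_one hx (Nat.add_one_ne_zero k)
  have hsnoc : (fun f : Fin (k + 1) → ℕ => countsTerm x ⟨k, f⟩) ∘ Fin.snocEquiv (fun _ => ℕ) =
      fun p => ((k + 1 : ℕ) : ℝ) * (p.1 * (x ^ (k + 1)) ^ p.1) * x ^ weight p.2 := by
    funext ⟨m, t⟩
    change countsTerm x ⟨k, Fin.snoc t m⟩ = _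
    simp only [countsTerm, Fin.snoc_last, weight_snoc, pow_add, pow_mul]
    ring
  have hmul : HasSum (fun m : ℕ => ((k + 1 : ℕ) : ℝ) * (m * (x ^ (k + 1)) ^ m))
      ((k + 1 : ℕ) * (x ^ (k + 1) / (1 - x ^ (k + 1)) ^ 2)) :=
    (hasSum_coe_mul_geometric_of_norm_lt_one (r := x ^ (k + 1))
      (by rwa [Real.norm_eq_abs])).mul_left _
  have hvalue : largestPartGF x (k + 1) =
      (k + 1 : ℕ) * (x ^ (k + 1) / (1 - x ^ (k + 1)) ^ 2) * ∏ j ∈ Icc 1 k, (1 - x ^ j)⁻¹ := by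
    have hx1 : 1 - x ^ (k + 1) ≠ 0 := by
      have := (abs_lt.1 hxk).2
      linarith
    rw [largestPartGF, prod_Icc_succ_top (by omega)]
    field_simp
  rw [← (Fin.snocEquiv fun _ => ℕ).hasSum_iff, hsnoc, hvalue]
  refine HasSum.mul_of_summable_norm
    (f := fun m : ℕ => ((k + 1 : ℕ) : ℝ) * (m * (x ^ (k + 1)) ^ m))
    (g := fun t : Fin k → ℕ => x ^ weight t) hmul (hasSum_pow_weight k hx) ?_ ?_
  · simpa [abs_of_pos (Nat.cast_add_one_pos (α := ℝ) k)] using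
      ((hasSum_coe_mul_geometric_of_norm_lt_one (r := |x| ^ (k + 1)) (by simpa using hxk)).mul_left
        ((k + 1 : ℕ) : ℝ)).summable
  · simpa using (hasSum_pow_weight k (x := |x|) (by rwa [abs_abs])).summable

lemma largestPartGF_le {a : ℝ} (h0 : 0 ≤ a) (h1 : a < 1) {k : ℕ} (hk : k ≠ 0) :
    largestPartGF a k ≤ (1 - a)⁻¹ * Real.exp ((1 - a)⁻¹ ^ 2) * (k * a ^ k) := by
  calc largestPartGF a k = k * a ^ k * (1 - a ^ k)⁻¹ * ∏ j ∈ Icc 1 k, (1 - a ^ j)⁻¹ := by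
        rw [largestPartGF, div_eq_mul_inv]
    _ ≤ k * a ^ k * (1 - a)⁻¹ * Real.exp ((1 - a)⁻¹ ^ 2) := by
        gcongr
        · exact prod_nonneg fun j _ => inv_nonneg.2 (sub_nonneg.2 (pow_le_one₀ h0 h1.le))
        · exact pow_le_of_le_one h0 h1.le hk
        · exact prod_inv_one_sub_pow_le h0 h1 k
    _ = _ := by ring

lemma summable_countsTerm {x : ℝ} (hx : |x| < 1) : Summable (countsTerm x) := by
  have ha : |(|x|)| < 1 := by rwa [abs_abs]
  have hnorm : (fun j => ‖countsTerm x j‖) = countsTerm |x| := by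
    funext j
    simp only [countsTerm, norm_mul, norm_pow, Real.norm_eq_abs, Nat.abs_cast]
  have hnonneg (j : Σ k : ℕ, Fin (k + 1) → ℕ) : 0 ≤ countsTerm |x| j := by
    unfold countsTerm
    positivity
  refine Summable.of_norm ?_
  rw [hnorm, summable_sigma_of_nonneg hnonneg]
  refine ⟨fun k => (hasSum_countsTerm_fiber k ha).summable, ?_⟩
  simp_rw [fun k => (hasSum_countsTerm_fiber k ha).tsum_eq]
  refine Summable.of_nonneg_of_le
    (fun k => (hasSum_countsTerm_fiber k ha).nonneg fun f => hnonneg _)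
    (fun k => largestPartGF_le (abs_nonneg x) hx (Nat.add_one_ne_zero k)) ?_
  refine Summable.mul_left _ ?_
  exact_mod_cast (summable_nat_add_iff 1).2
    (hasSum_coe_mul_geometric_of_norm_lt_one (r := |x|) (by simpa using hx)).summable

end LargestPart

open LargestPart

/-- `Σ_{λ ⊢ n} L_n(λ) M_n(λ) = [x^n] Σ_{k≥1} (k x^k/(1-x^k)) ∏_{j=1}^{k}(1-x^j)⁻¹`:
the sum over all partitions of `n` of (largest part × its multiplicity) equals the
coefficient of `x^n` in `Σ_{k≥1} (k x^k/(1-x^k)) ∏_{j=1}^{k}(1-x^j)⁻¹`, expressed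
as the generating-function identity for `|x| < 1`. -/
theorem stmt_6 (x : ℝ) (hx : |x| < 1) :
    ∑' n : ℕ,
        (∑ lam : Nat.Partition n,
          ((lam.parts.sup * lam.parts.count lam.parts.sup : ℕ) : ℝ)) * x ^ n =
      ∑' k : {k : ℕ // 1 ≤ k},
        ((k : ℕ) : ℝ) * x ^ (k : ℕ) / (1 - x ^ (k : ℕ)) *
          ∏ j ∈ Finset.Icc 1 (k : ℕ), (1 - x ^ j)⁻¹ := by
  obtain ⟨s, hs⟩ := summable_countsTerm hx
  have hlhs : HasSum (fun n : ℕ => (∑ lam : Nat.Partition n,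
      ((lam.parts.sup * lam.parts.count lam.parts.sup : ℕ) : ℝ)) * x ^ n) s :=
    (hasSum_partitionTerm_iff.2 hs).sigma fun n => by
      simpa only [partitionTerm, sum_mul] using
        hasSum_fintype fun lam : Nat.Partition n => partitionTerm x ⟨n, lam⟩
  have hrhs : HasSum (fun k : {k : ℕ // 1 ≤ k} => largestPartGF x k) s :=
    hasSum_subtype_one_le_iff.2 (hs.sigma fun k => hasSum_countsTerm_fiber k hx)
  exact hlhs.tsum_eq.trans hrhs.tsum_eq.symm
end

section
/- As y → ∞, ∫_y^∞ w/(e^w - 1) dw = -y log(1 - e^{-y}) + e^{-y} + O(e^{-2y}). -/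
/-!
Integration by parts against `w ↦ w log (1 - e^{-w})`, which tends to `0` at infinity and has
derivative `log (1 - e^{-w}) + w / (e^w - 1)`, gives
`∫_y^∞ w / (e^w - 1) dw = -y log (1 - e^{-y}) - ∫_y^∞ log (1 - e^{-w}) dw`.
Since `log (1 - x) = -x + O(x²)`, the last integral is `-e^{-y} + O(e^{-2y})`.
-/

open Filter MeasureTheory Set Real Asymptotics Topology

lemma exp_neg_le_half {w : ℝ} (hw : 1 ≤ w) : exp (-w) ≤ 1 / 2 :=
  ((exp_le_exp.2 (neg_le_neg hw)).trans_lt exp_neg_one_lt_half).le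

lemma one_sub_exp_neg_pos {w : ℝ} (hw : 0 < w) : 0 < 1 - exp (-w) :=
  sub_pos.2 (exp_lt_one_iff.2 (neg_lt_zero.2 hw))

lemma exp_sub_one_pos {w : ℝ} (hw : 0 < w) : 0 < exp w - 1 :=
  sub_pos.2 (one_lt_exp_iff.2 hw)

lemma neg_inv_exp_sub_one_le_log_one_sub_exp_neg {w : ℝ} (hw : 0 < w) :
    -(exp w - 1)⁻¹ ≤ log (1 - exp (-w)) := by
  convert one_sub_inv_le_log_of_pos (one_sub_exp_neg_pos hw) using 1
  have := (exp_sub_one_pos hw).ne'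
  rw [exp_neg]
  field_simp
  ring

lemma abs_log_one_sub_exp_neg_add_exp_neg_le {w : ℝ} (hw : 1 ≤ w) :
    |log (1 - exp (-w)) + exp (-w)| ≤ 2 * exp (-2 * w) := by
  have hhalf := exp_neg_le_half hw
  have hpos := exp_pos (-w)
  have h := abs_log_sub_add_sum_range_le (x := exp (-w)) (by rw [abs_of_pos hpos]; linarith) 1
  have hsq : exp (-w) ^ 2 = exp (-2 * w) := by rw [← exp_nat_mul]; ring_nf
  rw [abs_of_pos hpos] at h
  simp only [Finset.sum_range_one, zero_add, pow_one, Nat.cast_zero, div_one] at h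
  rw [add_comm] at h
  calc _ ≤ exp (-w) ^ 2 / (1 - exp (-w)) := h
    _ ≤ exp (-w) ^ 2 / (1 / 2) := by gcongr; linarith
    _ = 2 * exp (-2 * w) := by rw [hsq]; ring

lemma hasDerivAt_mul_log_one_sub_exp_neg {w : ℝ} (hw : 0 < w) :
    HasDerivAt (fun w ↦ w * log (1 - exp (-w))) (log (1 - exp (-w)) + w / (exp w - 1)) w := by
  refine ((hasDerivAt_id' w).mul
    (((hasDerivAt_neg w).exp.const_sub 1).log (one_sub_exp_neg_pos hw).ne')).congr_deriv ?_
  have := (exp_sub_one_pos hw).ne'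
  have := (one_sub_exp_neg_pos hw).ne'
  rw [exp_neg]
  field_simp

lemma tendsto_mul_log_one_sub_exp_neg :
    Tendsto (fun w ↦ w * log (1 - exp (-w))) atTop (𝓝 0) := by
  have hlow : Tendsto (fun w ↦ -2 * (w ^ 1 * exp (-w))) atTop (𝓝 0) := by
    simpa using (tendsto_pow_mul_exp_neg_atTop_nhds_zero 1).const_mul (-2)
  refine tendsto_of_tendsto_of_tendsto_of_le_of_le' hlow tendsto_const_nhds ?_ ?_
  · filter_upwards [eventually_ge_atTop 1] with w hw
    have h := (abs_le.1 (abs_log_one_sub_exp_neg_add_exp_neg_le hw)).1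
    have hsq : exp (-2 * w) = exp (-w) * exp (-w) := by rw [← exp_add]; ring_nf
    have hhalf := exp_neg_le_half hw
    rw [hsq] at h
    have hlog : -2 * exp (-w) ≤ log (1 - exp (-w)) := by nlinarith [exp_pos (-w)]
    calc -2 * (w ^ 1 * exp (-w)) = w * (-2 * exp (-w)) := by ring
      _ ≤ w * log (1 - exp (-w)) := mul_le_mul_of_nonneg_left hlog (by linarith)
  · filter_upwards [eventually_ge_atTop 1] with w hw
    exact mul_nonpos_of_nonneg_of_nonpos (by linarith)
      (log_nonpos (one_sub_exp_neg_pos (by linarith)).le (by linarith [exp_pos (-w)]))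

-- A nonnegative derivative is automatically integrable (`integrableOn_Ioi_deriv_of_nonneg'`).
lemma deriv_mul_log_one_sub_exp_neg_nonneg {w : ℝ} (hw : 1 ≤ w) :
    0 ≤ log (1 - exp (-w)) + w / (exp w - 1) := by
  have h0 : 0 < w := by linarith
  have := neg_inv_exp_sub_one_le_log_one_sub_exp_neg h0
  have : (exp w - 1)⁻¹ ≤ w / (exp w - 1) := by
    rw [div_eq_mul_inv]
    exact le_mul_of_one_le_left (inv_nonneg.2 (exp_sub_one_pos h0).le) hw
  linarith

lemma ae_restrict_Ioi_norm_log_one_sub_exp_neg_add_exp_neg_le {y : ℝ} (hy : 1 ≤ y) :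
    ∀ᵐ w ∂volume.restrict (Ioi y), ‖log (1 - exp (-w)) + exp (-w)‖ ≤ 2 * exp (-2 * w) :=
  (ae_restrict_iff' measurableSet_Ioi).2 <| .of_forall fun _ hw ↦
    abs_log_one_sub_exp_neg_add_exp_neg_le (hy.trans hw.le)

lemma integrableOn_log_one_sub_exp_neg_add_exp_neg {y : ℝ} (hy : 1 ≤ y) :
    IntegrableOn (fun w ↦ log (1 - exp (-w)) + exp (-w)) (Ioi y) :=
  ((exp_neg_integrableOn_Ioi y two_pos).const_mul 2).mono' (by fun_prop)
    (ae_restrict_Ioi_norm_log_one_sub_exp_neg_add_exp_neg_le hy)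

lemma norm_integral_Ioi_log_one_sub_exp_neg_add_exp_neg_le {y : ℝ} (hy : 1 ≤ y) :
    ‖∫ w in Ioi y, (log (1 - exp (-w)) + exp (-w))‖ ≤ exp (-2 * y) := by
  refine (norm_integral_le_of_norm_le ((exp_neg_integrableOn_Ioi y two_pos).const_mul 2)
    (ae_restrict_Ioi_norm_log_one_sub_exp_neg_add_exp_neg_le hy)).trans_eq ?_
  rw [integral_const_mul, integral_exp_mul_Ioi (by norm_num)]
  ring

lemma integral_Ioi_div_exp_sub_one {y : ℝ} (hy : 1 ≤ y) :
    ∫ w in Ioi y, w / (exp w - 1) =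
      -y * log (1 - exp (-y)) + exp (-y) - ∫ w in Ioi y, (log (1 - exp (-w)) + exp (-w)) := by
  have hderiv : ∀ w ∈ Ici y, HasDerivAt (fun w ↦ w * log (1 - exp (-w)))
      (log (1 - exp (-w)) + w / (exp w - 1)) w :=
    fun _ hw ↦ hasDerivAt_mul_log_one_sub_exp_neg (by linarith [hw.out])
  have hnonneg : ∀ w ∈ Ioi y, 0 ≤ log (1 - exp (-w)) + w / (exp w - 1) :=
    fun _ hw ↦ deriv_mul_log_one_sub_exp_neg_nonneg (hy.trans hw.out.le)
  have hG := integrableOn_Ioi_deriv_of_nonneg' hderiv hnonneg tendsto_mul_log_one_sub_exp_neg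
  have hL := integrableOn_log_one_sub_exp_neg_add_exp_neg hy
  calc ∫ w in Ioi y, w / (exp w - 1)
      = ∫ w in Ioi y, (log (1 - exp (-w)) + w / (exp w - 1)
          - (log (1 - exp (-w)) + exp (-w)) + exp (-w)) := by congr 1; ext w; ring
    _ = (∫ w in Ioi y, (log (1 - exp (-w)) + w / (exp w - 1)))
          - (∫ w in Ioi y, (log (1 - exp (-w)) + exp (-w))) + ∫ w in Ioi y, exp (-w) := by
        rw [integral_add ?_ (integrableOn_exp_neg_Ioi y), integral_sub hG hL]
        exact hG.sub hL
    _ = _ := by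
        rw [integral_Ioi_of_hasDerivAt_of_nonneg' hderiv hnonneg tendsto_mul_log_one_sub_exp_neg,
          integral_exp_neg_Ioi]
        ring

open Filter in
/-- As `y → ∞`, `∫_y^∞ w/(e^w - 1) dw = -y log(1 - e^{-y}) + e^{-y} + O(e^{-2y})`. -/
theorem stmt_11 :
    (fun y : ℝ => (∫ w in Set.Ioi y, w / (Real.exp w - 1)) -
        (-y * Real.log (1 - Real.exp (-y)) + Real.exp (-y))) =O[atTop]
      fun y : ℝ => Real.exp (-2 * y) := by
  refine IsBigO.of_bound 1 ?_
  filter_upwards [eventually_ge_atTop 1] with y hy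
  rw [integral_Ioi_div_exp_sub_one hy, sub_sub_cancel_left, norm_neg, one_mul,
    norm_of_nonneg (exp_pos _).le]
  exact norm_integral_Ioi_log_one_sub_exp_neg_add_exp_neg_le hy
end
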